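/- Let T be a tree on a finite set I, and fix a nice total order ⪯ on V(T). For every π ∈ Ad(T) other than the one-block partition of I, there exists a unique τ ∈ Ad(T) covering π such that λ(π, τ) = min_⪯ ( V(T) \ V(π) ). -/

import Mathlib

open Finset

/-- A rooted binary tree with leaves labeled in `α`. -/
inductive BTree (α : Type) : Type where
  | leaf : α → BTree α
  | node : BTree α → BTree α → BTree α

namespace BTree

variable {α : Type} [DecidableEq α]

/-- The list of leaf labels of the tree. -/
def leafList : BTree α → List α
  | .leaf a => [a]
  | .node l r => l.leafList ++ r.leafList

/-- The set of leaf labels of the tree. -/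
def leaves (t : BTree α) : Finset α := t.leafList.toFinset

/-- `t` is a tree on the finite set `I`: its leaves are labeled bijectively by `I`. -/
def IsTreeOn (t : BTree α) (I : Finset α) : Prop :=
  t.leafList.Nodup ∧ t.leaves = I

/-- The set `V(t)` of internal vertices of the tree, each internal vertex being
represented by the set of its ancestor leaves (the leaf labels of the subtree
rooted there).  In this representation a vertex `v` is below a vertex `w` in the
ancestor order (i.e. `w` lies on the path from `v` to the root) exactly when
`v ⊆ w`. -/
def vertexSet : BTree α → Finset (Finset α)
  | .leaf _ => ∅
  | .node l r => insert (l.leaves ∪ r.leaves) (l.vertexSet ∪ r.vertexSet)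

/-- The list of internal vertices of the tree, recorded as the pairs
(left subtree, right subtree) hanging at each internal vertex. -/
def nodes : BTree α → List (BTree α × BTree α)
  | .leaf _ => []
  | .node l r => (l, r) :: (l.nodes ++ r.nodes)

/-- `meetVertex t i j` is the internal vertex `v_{(i,j)}` at which the paths from the
leaves labeled `i` and `j` towards the root first meet (as the set of its ancestor
leaves); meaningful when `i ≠ j` are both leaf labels of `t`. -/
def meetVertex : BTree α → α → α → Finset α
  | .leaf a, _, _ => {a}
  | .node l r, i, j =>
    if i ∈ l.leaves ∧ j ∈ l.leaves then l.meetVertex i j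
    else if i ∈ r.leaves ∧ j ∈ r.leaves then r.meetVertex i j
    else l.leaves ∪ r.leaves

/-- `S(J) = { v_{(i,j)} : i, j ∈ J, i ≠ j }`. -/
def S (t : BTree α) (J : Finset α) : Finset (Finset α) :=
  ((J ×ˢ J).filter fun p => p.1 ≠ p.2).image fun p => t.meetVertex p.1 p.2

/-- A partition `π` of `I` is `T`-admissible when `S(B) ∩ S(B') = ∅` for every pair of
distinct blocks `B, B'` of `π`. -/
def Admissible (t : BTree α) {I : Finset α} (π : Finpartition I) : Prop :=
  ∀ B ∈ π.parts, ∀ C ∈ π.parts, B ≠ C → t.S B ∩ t.S C = ∅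

/-- A nice total order on the internal vertices of `T`, encoded by an integer-valued
ranking function: it is injective on `V(T)` and is a linear extension of the ancestor
order (a vertex `v` is below `w`, i.e. `w` is on the path from `v` to the root, iff
`v ⊆ w` in the ancestor-leaves representation). -/
def IsNiceOrder (t : BTree α) (ord : Finset α → ℕ) : Prop :=
  Set.InjOn ord ↑t.vertexSet ∧
    ∀ v ∈ t.vertexSet, ∀ w ∈ t.vertexSet, v ⊆ w → ord v ≤ ord w

/-- A nice total order identifying `V(T)` with `{1, …, n}`. -/
def IsNiceLabeling (t : BTree α) (n : ℕ) (ord : Finset α → ℕ) : Prop :=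
  t.IsNiceOrder ord ∧ t.vertexSet.image ord = Finset.Icc 1 n

end BTree

/-- The poset `Ad(T)` of `T`-admissible partitions of `I`, ordered by refinement
(the order is inherited from the refinement order on `Finpartition I`). -/
def AdPartition {α : Type} [DecidableEq α] (T : BTree α) (I : Finset α) : Type :=
  {π : Finpartition I // T.Admissible π}

namespace AdPartition

variable {α : Type} [DecidableEq α] {T : BTree α} {I : Finset α}

instance : PartialOrder (AdPartition T I) := Subtype.partialOrder _

/-- The set `V(π)` of internal vertices of a partition: the union of the `S(B)` over
the blocks `B` of `π`. -/
def verts (T : BTree α) {I : Finset α} (π : Finpartition I) : Finset (Finset α) :=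
  π.parts.sup fun B => T.S B

/-- The edge label `λ(π, τ)` of a covering relation `π ⋖ τ` in `Ad(T)`: the unique
internal vertex `v` with `V(τ) = V(π) ∪ {v}` (extracted here as the union of the
finset `V(τ) \ V(π)`, which is the singleton `{v}` when `π ⋖ τ`). -/
def label (T : BTree α) {I : Finset α} (π τ : AdPartition T I) : Finset α :=
  (verts T τ.1 \ verts T π.1).sup id

/-- The label sequence, with respect to a nice order `ord`, of a saturated chain
recorded as a list of consecutive elements. -/
def labelSeq (T : BTree α) {I : Finset α} (ord : Finset α → ℕ)
    (c : List (AdPartition T I)) : List ℕ :=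
  (c.zip c.tail).map fun p => ord (label T p.1 p.2)

/-- The atom of `Ad(T)` whose unique doubleton block is `{p, q}`, all other blocks
being singletons. -/
def IsAtomPart (T : BTree α) (I : Finset α) (a : AdPartition T I) (p q : α) : Prop :=
  p ≠ q ∧ a.1.parts = insert {p, q} ((I \ {p, q}).image fun x => ({x} : Finset α))

end AdPartition

section LatticeGen

variable {P : Type*} [PartialOrder P]

/-- A subset of a partial order closed under existing pairwise joins and meets. -/
def IsLatClosed (D : Set P) : Prop :=
  (∀ x ∈ D, ∀ y ∈ D, ∀ z, IsLUB {x, y} z → z ∈ D) ∧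
    (∀ x ∈ D, ∀ y ∈ D, ∀ z, IsGLB {x, y} z → z ∈ D)

/-- The sublattice generated by a subset of a partial order: the smallest subset
containing it that is closed under pairwise joins and meets. -/
def latticeGen (s : Set P) : Set P :=
  ⋂₀ {D : Set P | s ⊆ D ∧ IsLatClosed D}

/-- The subset `D`, with the induced join and meet, is a distributive lattice:
`x ∧ (y ∨ z) = (x ∧ y) ∨ (x ∧ z)` for all `x, y, z ∈ D`. -/
def IsDistribSet (D : Set P) : Prop :=
  ∀ x ∈ D, ∀ y ∈ D, ∀ z ∈ D,
    ∀ yz, IsLUB {y, z} yz → ∀ w, IsGLB {x, yz} w →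
      ∀ xy, IsGLB {x, y} xy → ∀ xz, IsGLB {x, z} xz →
        ∀ u, IsLUB {xy, xz} u → w = u

end LatticeGen

section Aux

namespace BTree

variable {α : Type} [DecidableEq α]

/-- The subtree relation. -/
def IsSub : BTree α → BTree α → Prop
  | s, .leaf a => s = .leaf a
  | s, .node l r => s = .node l r ∨ IsSub s l ∨ IsSub s r

@[simp] lemma leaves_leaf (a : α) : (leaf a).leaves = {a} := rfl

@[simp] lemma leaves_node (l r : BTree α) : (node l r).leaves = l.leaves ∪ r.leaves := by
  simp [leaves, leafList]

lemma leaves_nonempty (t : BTree α) : t.leaves.Nonempty := by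
  induction t with
  | leaf a => exact ⟨a, by simp⟩
  | node l r ihl ihr =>
    obtain ⟨x, hx⟩ := ihl
    exact ⟨x, by simp [hx]⟩

lemma isSub_refl (t : BTree α) : IsSub t t := by
  cases t with
  | leaf a => simp [IsSub]
  | node l r => exact Or.inl rfl

lemma isSub_node_left {l r t : BTree α} (h : IsSub (node l r) t) : IsSub l t := by
  induction t with
  | leaf a => simp [IsSub] at h
  | node u v ihu ihv =>
    rcases h with h | h | h
    · cases h; exact Or.inr (Or.inl (isSub_refl _))
    · exact Or.inr (Or.inl (ihu h))
    · exact Or.inr (Or.inr (ihv h))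

lemma isSub_node_right {l r t : BTree α} (h : IsSub (node l r) t) : IsSub r t := by
  induction t with
  | leaf a => simp [IsSub] at h
  | node u v ihu ihv =>
    rcases h with h | h | h
    · cases h; exact Or.inr (Or.inr (isSub_refl _))
    · exact Or.inr (Or.inl (ihu h))
    · exact Or.inr (Or.inr (ihv h))

lemma nodup_of_isSub {s t : BTree α} (h : IsSub s t) (hnd : t.leafList.Nodup) :
    s.leafList.Nodup := by
  induction t with
  | leaf a => rw [show s = leaf a from h]; exact hnd
  | node l r ihl ihr =>
    have h' : (l.leafList ++ r.leafList).Nodup := hnd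
    rw [List.nodup_append] at h'
    rcases h with h | h | h
    · rw [h]; exact hnd
    · exact ihl h h'.1
    · exact ihr h h'.2.1

lemma disjoint_leaves_of_nodup {l r : BTree α} (hnd : (node l r).leafList.Nodup) :
    Disjoint l.leaves r.leaves := by
  have h' : (l.leafList ++ r.leafList).Nodup := hnd
  rw [List.nodup_append] at h'
  rw [Finset.disjoint_left]
  intro a hal har
  exact h'.2.2 a (by simpa [leaves] using hal) a (by simpa [leaves] using har) rfl

lemma vertexSet_isSub {s t : BTree α} (h : IsSub s t) : s.vertexSet ⊆ t.vertexSet := by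
  induction t with
  | leaf a => rw [show s = leaf a from h]
  | node l r ihl ihr =>
    rcases h with h | h | h
    · rw [h]
    · exact (ihl h).trans ((Finset.subset_union_left).trans (Finset.subset_insert _ _))
    · exact (ihr h).trans ((Finset.subset_union_right).trans (Finset.subset_insert _ _))

lemma leaves_isSub {s t : BTree α} (h : IsSub s t) : s.leaves ⊆ t.leaves := by
  induction t with
  | leaf a => rw [show s = leaf a from h]
  | node l r ihl ihr =>
    rcases h with h | h | h
    · rw [h]
    · exact (ihl h).trans (by simp)
    · exact (ihr h).trans (by simp)

lemma mem_vertexSet_iff {t : BTree α} {v : Finset α} :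
    v ∈ t.vertexSet ↔ ∃ l r, IsSub (node l r) t ∧ v = l.leaves ∪ r.leaves := by
  induction t with
  | leaf a => simp [vertexSet, IsSub]
  | node l r ihl ihr =>
    simp only [vertexSet, Finset.mem_insert, Finset.mem_union, ihl, ihr]
    constructor
    · rintro (rfl | ⟨l', r', hs, rfl⟩ | ⟨l', r', hs, rfl⟩)
      · exact ⟨l, r, Or.inl rfl, rfl⟩
      · exact ⟨l', r', Or.inr (Or.inl hs), rfl⟩
      · exact ⟨l', r', Or.inr (Or.inr hs), rfl⟩
    · rintro ⟨l', r', (h | h | h), rfl⟩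
      · cases h; exact Or.inl rfl
      · exact Or.inr (Or.inl ⟨l', r', h, rfl⟩)
      · exact Or.inr (Or.inr ⟨l', r', h, rfl⟩)

lemma vertex_subset_leaves {t : BTree α} {v : Finset α} (h : v ∈ t.vertexSet) :
    v ⊆ t.leaves := by
  obtain ⟨l, r, hs, rfl⟩ := mem_vertexSet_iff.1 h
  simpa using leaves_isSub hs

lemma vertex_nonempty {t : BTree α} {v : Finset α} (h : v ∈ t.vertexSet) : v.Nonempty := by
  obtain ⟨l, r, hs, rfl⟩ := mem_vertexSet_iff.1 h
  exact (leaves_nonempty l).mono Finset.subset_union_left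

lemma meet_subset_leaves (t : BTree α) (i j : α) : t.meetVertex i j ⊆ t.leaves := by
  induction t with
  | leaf a => simp [meetVertex]
  | node l r ihl ihr =>
    rw [meetVertex]
    split_ifs with h1 h2
    · exact ihl.trans (by simp)
    · exact ihr.trans (by simp)
    · simp

lemma mem_meet {t : BTree α} {i j : α} (hi : i ∈ t.leaves) (hj : j ∈ t.leaves) :
    i ∈ t.meetVertex i j ∧ j ∈ t.meetVertex i j := by
  induction t with
  | leaf a => simp_all [meetVertex]
  | node l r ihl ihr =>
    rw [meetVertex]
    split_ifs with h1 h2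
    · exact ihl h1.1 h1.2
    · exact ihr h2.1 h2.2
    · constructor
      · simpa using hi
      · simpa using hj

lemma meet_mem_vertexSet {t : BTree α} {i j : α} (hi : i ∈ t.leaves) (hj : j ∈ t.leaves)
    (hne : i ≠ j) : t.meetVertex i j ∈ t.vertexSet := by
  induction t with
  | leaf a =>
    exfalso; apply hne
    simp only [leaves_leaf, Finset.mem_singleton] at hi hj
    rw [hi, hj]
  | node l r ihl ihr =>
    rw [meetVertex, vertexSet]
    split_ifs with h1 h2
    · exact Finset.mem_insert_of_mem (Finset.mem_union_left _ (ihl h1.1 h1.2))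
    · exact Finset.mem_insert_of_mem (Finset.mem_union_right _ (ihr h2.1 h2.2))
    · exact Finset.mem_insert_self _ _

lemma meet_subset_vertex {t : BTree α} (hnd : t.leafList.Nodup) {v : Finset α}
    (hv : v ∈ t.vertexSet) {i j : α} (hi : i ∈ v) (hj : j ∈ v) : t.meetVertex i j ⊆ v := by
  induction t with
  | leaf a => simp [vertexSet] at hv
  | node l r ihl ihr =>
    have h' : (l.leafList ++ r.leafList).Nodup := hnd
    rw [List.nodup_append] at h'
    have hdisj := disjoint_leaves_of_nodup (l := l) (r := r) hnd
    rw [vertexSet, Finset.mem_insert, Finset.mem_union] at hv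
    rw [meetVertex]
    rcases hv with rfl | hv | hv
    · split_ifs with h1 h2
      · exact (meet_subset_leaves l i j).trans Finset.subset_union_left
      · exact (meet_subset_leaves r i j).trans Finset.subset_union_right
      · exact subset_rfl
    · have hvl : v ⊆ l.leaves := vertex_subset_leaves hv
      rw [if_pos ⟨hvl hi, hvl hj⟩]
      exact ihl h'.1 hv
    · have hvr : v ⊆ r.leaves := vertex_subset_leaves hv
      have hil : i ∉ l.leaves := fun h => (Finset.disjoint_left.1 hdisj) h (hvr hi)
      rw [if_neg (fun h => hil h.1), if_pos ⟨hvr hi, hvr hj⟩]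
      exact ihr h'.2.1 hv

lemma laminar {t : BTree α} (hnd : t.leafList.Nodup) {u v : Finset α}
    (hu : u ∈ t.vertexSet) (hv : v ∈ t.vertexSet) :
    u ⊆ v ∨ v ⊆ u ∨ Disjoint u v := by
  induction t with
  | leaf a => simp [vertexSet] at hu
  | node l r ihl ihr =>
    have h' : (l.leafList ++ r.leafList).Nodup := hnd
    rw [List.nodup_append] at h'
    have hdisj := disjoint_leaves_of_nodup (l := l) (r := r) hnd
    rw [vertexSet, Finset.mem_insert, Finset.mem_union] at hu hv
    rcases hu with rfl | hu | hu
    · rcases hv with rfl | hv | hv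
      · exact Or.inl subset_rfl
      · exact Or.inr (Or.inl ((vertex_subset_leaves hv).trans Finset.subset_union_left))
      · exact Or.inr (Or.inl ((vertex_subset_leaves hv).trans Finset.subset_union_right))
    · rcases hv with rfl | hv | hv
      · exact Or.inl ((vertex_subset_leaves hu).trans Finset.subset_union_left)
      · exact ihl h'.1 hu hv
      · exact Or.inr (Or.inr (hdisj.mono (vertex_subset_leaves hu) (vertex_subset_leaves hv)))
    · rcases hv with rfl | hv | hv
      · exact Or.inl ((vertex_subset_leaves hu).trans Finset.subset_union_right)
      · exact Or.inr (Or.inr (hdisj.symm.mono (vertex_subset_leaves hu) (vertex_subset_leaves hv)))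
      · exact ihr h'.2.1 hu hv

lemma vertex_mem_of_subset {t : BTree α} (hnd : t.leafList.Nodup) {s : BTree α} {w : Finset α}
    (hw : w ∈ t.vertexSet) (hs : IsSub s t) (hsub : w ⊆ s.leaves) : w ∈ s.vertexSet := by
  induction t with
  | leaf a => simp [vertexSet] at hw
  | node l r ihl ihr =>
    have h' : (l.leafList ++ r.leafList).Nodup := hnd
    rw [List.nodup_append] at h'
    have hdisj := disjoint_leaves_of_nodup (l := l) (r := r) hnd
    have hwne : w.Nonempty := vertex_nonempty hw
    rcases hs with rfl | hs | hs
    · exact hw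
    · -- s is a subtree of l
      have hsl : s.leaves ⊆ l.leaves := leaves_isSub hs
      rw [vertexSet, Finset.mem_insert, Finset.mem_union] at hw
      rcases hw with rfl | hw | hw
      · exfalso
        obtain ⟨x, hx⟩ := leaves_nonempty r
        have : x ∈ l.leaves := hsl (hsub (by simp [hx]))
        exact (Finset.disjoint_left.1 hdisj) this hx
      · exact ihl h'.1 hw hs
      · exfalso
        obtain ⟨x, hx⟩ := hwne
        exact (Finset.disjoint_left.1 hdisj) (hsl (hsub hx)) (vertex_subset_leaves hw hx)
    · have hsr : s.leaves ⊆ r.leaves := leaves_isSub hs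
      rw [vertexSet, Finset.mem_insert, Finset.mem_union] at hw
      rcases hw with rfl | hw | hw
      · exfalso
        obtain ⟨x, hx⟩ := leaves_nonempty l
        have : x ∈ r.leaves := hsr (hsub (by simp [hx]))
        exact (Finset.disjoint_left.1 hdisj) hx this
      · exfalso
        obtain ⟨x, hx⟩ := hwne
        exact (Finset.disjoint_left.1 hdisj) (vertex_subset_leaves hw hx) (hsr (hsub hx))
      · exact ihr h'.2.1 hw hs

lemma meet_comm (t : BTree α) (i j : α) : t.meetVertex i j = t.meetVertex j i := by
  induction t with
  | leaf a => rfl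
  | node l r ihl ihr =>
    rw [meetVertex, meetVertex]
    split_ifs <;> first | exact ihl | exact ihr | rfl | tauto

lemma meet_node_eq {t l r : BTree α} (hnd : t.leafList.Nodup) (hs : IsSub (node l r) t)
    {i j : α} (hi : i ∈ l.leaves) (hj : j ∈ r.leaves) :
    t.meetVertex i j = l.leaves ∪ r.leaves := by
  have hndlr : (node l r).leafList.Nodup := nodup_of_isSub hs hnd
  have hdisj := disjoint_leaves_of_nodup hndlr
  have hne : i ≠ j := fun h => (Finset.disjoint_left.1 hdisj) hi (h ▸ hj)
  have hv₀ : l.leaves ∪ r.leaves ∈ t.vertexSet := mem_vertexSet_iff.2 ⟨l, r, hs, rfl⟩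
  have hit : i ∈ t.leaves := leaves_isSub hs (by simp [hi])
  have hjt : j ∈ t.leaves := leaves_isSub hs (by simp [hj])
  have hm : t.meetVertex i j ∈ t.vertexSet := meet_mem_vertexSet hit hjt hne
  have hmsub : t.meetVertex i j ⊆ l.leaves ∪ r.leaves :=
    meet_subset_vertex hnd hv₀ (by simp [hi]) (by simp [hj])
  have hm' : t.meetVertex i j ∈ (node l r).vertexSet :=
    vertex_mem_of_subset hnd hm hs (by simpa using hmsub)
  have hmem := mem_meet hit hjt
  rw [vertexSet, Finset.mem_insert, Finset.mem_union] at hm'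
  rcases hm' with h | h | h
  · exact h
  · exact absurd (vertex_subset_leaves h hmem.2)
      (fun hc => (Finset.disjoint_left.1 hdisj) hc hj)
  · exact absurd (vertex_subset_leaves h hmem.1)
      (fun hc => (Finset.disjoint_left.1 hdisj) hi hc)

/-- If both `i` and `j` belong to the leaf set of `s`, then so does their meet vertex. -/
lemma meet_subset_sub_leaves {t s : BTree α} (hnd : t.leafList.Nodup) (hs : IsSub s t)
    {i j : α} (hi : i ∈ s.leaves) (hj : j ∈ s.leaves) (hne : i ≠ j) :
    t.meetVertex i j ⊆ s.leaves := by
  cases s with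
  | leaf a =>
    exfalso; apply hne
    simp only [leaves_leaf, Finset.mem_singleton] at hi hj
    rw [hi, hj]
  | node l r =>
    have hv : l.leaves ∪ r.leaves ∈ t.vertexSet := mem_vertexSet_iff.2 ⟨l, r, hs, rfl⟩
    simpa using meet_subset_vertex hnd hv (by simpa using hi) (by simpa using hj)

lemma mem_S {t : BTree α} {B : Finset α} {v : Finset α} :
    v ∈ t.S B ↔ ∃ i ∈ B, ∃ j ∈ B, i ≠ j ∧ t.meetVertex i j = v := by
  simp only [S, Finset.mem_image, Finset.mem_filter, Finset.mem_product]
  constructor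
  · rintro ⟨⟨i, j⟩, ⟨⟨hi, hj⟩, hne⟩, rfl⟩
    exact ⟨i, hi, j, hj, hne, rfl⟩
  · rintro ⟨i, hi, j, hj, hne, rfl⟩
    exact ⟨⟨i, j⟩, ⟨⟨hi, hj⟩, hne⟩, rfl⟩

lemma S_mono (t : BTree α) {B C : Finset α} (h : B ⊆ C) : t.S B ⊆ t.S C := by
  intro v hv
  rw [mem_S] at hv ⊢
  obtain ⟨i, hi, j, hj, hne, hm⟩ := hv
  exact ⟨i, h hi, j, h hj, hne, hm⟩

end BTree

namespace AdPartition

variable {α : Type} [DecidableEq α] {T : BTree α} {I : Finset α}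

lemma mem_verts {π : Finpartition I} {v : Finset α} :
    v ∈ verts T π ↔ ∃ B ∈ π.parts, v ∈ T.S B := by
  simp [verts, Finset.mem_sup]

end AdPartition

/-- Merging two distinct parts of a finpartition. -/
def Finpartition.mergeParts {α : Type} [DecidableEq α] {I : Finset α} (π : Finpartition I)
    (B₁ B₂ : Finset α) (h₁ : B₁ ∈ π.parts) (h₂ : B₂ ∈ π.parts) (hne : B₁ ≠ B₂) :
    Finpartition I where
  parts := insert (B₁ ∪ B₂) ((π.parts.erase B₂).erase B₁)
  supIndep := by
    rw [Finset.supIndep_iff_pairwiseDisjoint]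
    have key : ∀ C ∈ (π.parts.erase B₂).erase B₁, Disjoint (B₁ ∪ B₂) C := by
      intro C hC
      rw [Finset.mem_erase] at hC
      have hC1 : C ≠ B₁ := hC.1
      have hC2 : C ≠ B₂ := (Finset.mem_erase.1 hC.2).1
      have hCp : C ∈ π.parts := (Finset.mem_erase.1 hC.2).2
      exact Finset.disjoint_union_left.2
        ⟨π.disjoint h₁ hCp (Ne.symm hC1), π.disjoint h₂ hCp (Ne.symm hC2)⟩
    intro a ha b hb hab
    rw [Finset.coe_insert, Set.mem_insert_iff] at ha hb
    rcases ha with rfl | ha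
    · rcases hb with rfl | hb
      · exact absurd rfl hab
      · exact key _ hb
    · rcases hb with rfl | hb
      · exact (key _ ha).symm
      · have ha' := Finset.mem_of_mem_erase (Finset.mem_of_mem_erase ha)
        have hb' := Finset.mem_of_mem_erase (Finset.mem_of_mem_erase hb)
        exact π.disjoint ha' hb' hab
  sup_parts := by
    apply le_antisymm
    · rw [Finset.sup_insert]
      apply sup_le
      · exact Finset.union_subset (π.le h₁) (π.le h₂)
      · exact (Finset.sup_mono ((Finset.erase_subset _ _).trans
          (Finset.erase_subset _ _))).trans π.sup_parts.le
    · refine le_trans (le_of_eq π.sup_parts.symm) (Finset.sup_le ?_)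
      intro C hC
      by_cases hCB : C = B₁ ∨ C = B₂
      · refine le_trans ?_ (Finset.le_sup (Finset.mem_insert_self _ _))
        rcases hCB with rfl | rfl
        · exact Finset.subset_union_left
        · exact Finset.subset_union_right
      · push_neg at hCB
        exact Finset.le_sup (Finset.mem_insert_of_mem
          (Finset.mem_erase.2 ⟨hCB.1, Finset.mem_erase.2 ⟨hCB.2, hC⟩⟩))
  bot_notMem := by
    rw [Finset.mem_insert]
    rintro (h | h)
    · obtain ⟨x, hx⟩ := π.nonempty_of_mem_parts h₁
      have : x ∈ (⊥ : Finset α) := h ▸ Finset.mem_union_left _ hx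
      simp at this
    · exact π.bot_notMem (Finset.mem_of_mem_erase (Finset.mem_of_mem_erase h))

lemma Finpartition.eq_of_parts_subset {α : Type} [DecidableEq α] {I : Finset α}
    {σ τ : Finpartition I} (h : τ.parts ⊆ σ.parts) : σ = τ := by
  ext D
  refine ⟨fun hD => ?_, fun hD => h hD⟩
  obtain ⟨a, ha⟩ := σ.nonempty_of_mem_parts hD
  obtain ⟨C, hC, haC⟩ := τ.exists_mem (σ.le hD ha)
  rwa [σ.eq_of_mem_parts hD (h hC) ha haC]

end Aux
section Main

namespace BTree

variable {α : Type} [DecidableEq α]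

lemma meet_split {t l r : BTree α} (hnd : t.leafList.Nodup) (hs : IsSub (node l r) t)
    {i j : α} (hit : i ∈ t.leaves) (hjt : j ∈ t.leaves) (hne : i ≠ j)
    (hm : t.meetVertex i j = l.leaves ∪ r.leaves) :
    (i ∈ l.leaves ∧ j ∈ r.leaves) ∨ (i ∈ r.leaves ∧ j ∈ l.leaves) := by
  have hdisj := disjoint_leaves_of_nodup (nodup_of_isSub hs hnd)
  have hi' : i ∈ l.leaves ∪ r.leaves := hm ▸ (mem_meet hit hjt).1
  have hj' : j ∈ l.leaves ∪ r.leaves := hm ▸ (mem_meet hit hjt).2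
  rw [Finset.mem_union] at hi' hj'
  have hll : ¬(i ∈ l.leaves ∧ j ∈ l.leaves) := by
    rintro ⟨h1, h2⟩
    have hsubl : t.meetVertex i j ⊆ l.leaves :=
      meet_subset_sub_leaves hnd (isSub_node_left hs) h1 h2 hne
    obtain ⟨x, hx⟩ := leaves_nonempty r
    have hxm : x ∈ t.meetVertex i j := by rw [hm]; exact Finset.mem_union_right _ hx
    exact Finset.disjoint_left.1 hdisj (hsubl hxm) hx
  have hrr : ¬(i ∈ r.leaves ∧ j ∈ r.leaves) := by
    rintro ⟨h1, h2⟩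
    have hsubr : t.meetVertex i j ⊆ r.leaves :=
      meet_subset_sub_leaves hnd (isSub_node_right hs) h1 h2 hne
    obtain ⟨x, hx⟩ := leaves_nonempty l
    have hxm : x ∈ t.meetVertex i j := by rw [hm]; exact Finset.mem_union_left _ hx
    exact Finset.disjoint_left.1 hdisj hx (hsubr hxm)
  tauto

lemma exists_block_of_subtree {T : BTree α} {I : Finset α} (hnd : T.leafList.Nodup)
    (hleaves : T.leaves = I) (π : Finpartition I) (s : BTree α) (hs : IsSub s T)
    (hV : ∀ w ∈ s.vertexSet, w ∈ AdPartition.verts T π) :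
    ∃ B ∈ π.parts, s.leaves ⊆ B := by
  induction s with
  | leaf a =>
    have haI : a ∈ I := hleaves ▸ leaves_isSub hs (by simp)
    obtain ⟨B, hB, haB⟩ := π.exists_mem haI
    exact ⟨B, hB, by simp [haB]⟩
  | node l r ihl ihr =>
    obtain ⟨B₁, hB₁, hlB⟩ := ihl (isSub_node_left hs)
      (fun w hw => hV w (Finset.mem_insert_of_mem (Finset.mem_union_left _ hw)))
    obtain ⟨B₂, hB₂, hrB⟩ := ihr (isSub_node_right hs)
      (fun w hw => hV w (Finset.mem_insert_of_mem (Finset.mem_union_right _ hw)))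
    have htop := hV (l.leaves ∪ r.leaves) (Finset.mem_insert_self _ _)
    rw [AdPartition.mem_verts] at htop
    obtain ⟨B, hB, hmem⟩ := htop
    rw [mem_S] at hmem
    obtain ⟨i, hi, j, hj, hij, hmeet⟩ := hmem
    have hiT : i ∈ T.leaves := by rw [hleaves]; exact π.le hB hi
    have hjT : j ∈ T.leaves := by rw [hleaves]; exact π.le hB hj
    rcases meet_split hnd hs hiT hjT hij hmeet with ⟨h1, h2⟩ | ⟨h1, h2⟩
    · have e1 : B = B₁ := π.eq_of_mem_parts hB hB₁ hi (hlB h1)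
      have e2 : B = B₂ := π.eq_of_mem_parts hB hB₂ hj (hrB h2)
      exact ⟨B, hB, by rw [leaves_node]; exact Finset.union_subset (e1 ▸ hlB) (e2 ▸ hrB)⟩
    · have e1 : B = B₂ := π.eq_of_mem_parts hB hB₂ hi (hrB h1)
      have e2 : B = B₁ := π.eq_of_mem_parts hB hB₁ hj (hlB h2)
      exact ⟨B, hB, by rw [leaves_node]; exact Finset.union_subset (e2 ▸ hlB) (e1 ▸ hrB)⟩

end BTree

end Main
/-- for every `π ∈ Ad(T)` other than the one-block partition, there is a
unique `τ ∈ Ad(T)` covering `π` whose label `λ(π, τ)` is the minimum, in a fixed nice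
total order, of `V(T) \ V(π)`. -/
theorem stmt5 {α : Type} [DecidableEq α] (I : Finset α) (T : BTree α)
    (hT : T.IsTreeOn I) (ord : Finset α → ℕ) (hord : T.IsNiceOrder ord)
    (π : AdPartition T I) (hπ : π.1.parts ≠ {I})
    (v₀ : Finset α)
    (hv₀mem : v₀ ∈ T.vertexSet \ AdPartition.verts T π.1)
    (hv₀min : ∀ w ∈ T.vertexSet \ AdPartition.verts T π.1, ord v₀ ≤ ord w) :
    ∃! τ : AdPartition T I, π ⋖ τ ∧
      AdPartition.verts T τ.1 = insert v₀ (AdPartition.verts T π.1) := by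
  obtain ⟨hnd, hleaves⟩ := hT
  rw [Finset.mem_sdiff] at hv₀mem
  obtain ⟨hv₀T, hv₀π⟩ := hv₀mem
  obtain ⟨l, r, hsub, hv₀eq⟩ := BTree.mem_vertexSet_iff.1 hv₀T
  have hndlr : (BTree.node l r).leafList.Nodup := BTree.nodup_of_isSub hsub hnd
  have hdisjlr : Disjoint l.leaves r.leaves := BTree.disjoint_leaves_of_nodup hndlr
  have hlsub : l.leaves ⊆ v₀ := by rw [hv₀eq]; exact Finset.subset_union_left
  have hrsub : r.leaves ⊆ v₀ := by rw [hv₀eq]; exact Finset.subset_union_right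
  have hv₀I : v₀ ⊆ I := by rw [← hleaves]; exact BTree.vertex_subset_leaves hv₀T
  -- Step 1: every vertex strictly below v₀ is in V(π).
  have hbelow : ∀ w ∈ T.vertexSet, w ⊆ v₀ → w ≠ v₀ → w ∈ AdPartition.verts T π.1 := by
    intro w hwT hwsub hwne
    by_contra hwπ
    have h1 : ord v₀ ≤ ord w := hv₀min w (Finset.mem_sdiff.2 ⟨hwT, hwπ⟩)
    have h2 : ord w ≤ ord v₀ := hord.2 w hwT v₀ hv₀T hwsub
    exact hwne (hord.1 (Finset.mem_coe.2 hwT) (Finset.mem_coe.2 hv₀T) (le_antisymm h2 h1))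
  -- Step 2: blocks containing the two children subtrees.
  have hVl : ∀ w ∈ l.vertexSet, w ∈ AdPartition.verts T π.1 := by
    intro w hw
    have hwT : w ∈ T.vertexSet := BTree.vertexSet_isSub (BTree.isSub_node_left hsub) hw
    have hwl : w ⊆ l.leaves := BTree.vertex_subset_leaves hw
    refine hbelow w hwT (hwl.trans hlsub) ?_
    rintro rfl
    obtain ⟨x, hx⟩ := BTree.leaves_nonempty r
    exact Finset.disjoint_left.1 hdisjlr (hwl (hrsub hx)) hx
  have hVr : ∀ w ∈ r.vertexSet, w ∈ AdPartition.verts T π.1 := by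
    intro w hw
    have hwT : w ∈ T.vertexSet := BTree.vertexSet_isSub (BTree.isSub_node_right hsub) hw
    have hwr : w ⊆ r.leaves := BTree.vertex_subset_leaves hw
    refine hbelow w hwT (hwr.trans hrsub) ?_
    rintro rfl
    obtain ⟨x, hx⟩ := BTree.leaves_nonempty l
    exact Finset.disjoint_left.1 hdisjlr hx (hwr (hlsub hx))
  obtain ⟨B₁, hB₁p, hlB⟩ := BTree.exists_block_of_subtree hnd hleaves π.1 l
    (BTree.isSub_node_left hsub) hVl
  obtain ⟨B₂, hB₂p, hrB⟩ := BTree.exists_block_of_subtree hnd hleaves π.1 r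
    (BTree.isSub_node_right hsub) hVr
  obtain ⟨x₀, hx₀⟩ := BTree.leaves_nonempty l
  obtain ⟨y₀, hy₀⟩ := BTree.leaves_nonempty r
  have hmeet_v0 : ∀ i ∈ l.leaves, ∀ j ∈ r.leaves, T.meetVertex i j = v₀ := by
    intro i hi j hj
    rw [BTree.meet_node_eq hnd hsub hi hj, hv₀eq]
  have hxy_ne : x₀ ≠ y₀ := fun h => Finset.disjoint_left.1 hdisjlr hx₀ (h ▸ hy₀)
  have hB12ne : B₁ ≠ B₂ := by
    rintro rfl
    exact hv₀π (AdPartition.mem_verts.2 ⟨B₁, hB₁p,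
      BTree.mem_S.2 ⟨x₀, hlB hx₀, y₀, hrB hy₀, hxy_ne, hmeet_v0 x₀ hx₀ y₀ hy₀⟩⟩)
  have hdisjB : Disjoint B₁ B₂ := π.1.disjoint hB₁p hB₂p hB12ne
  -- membership in T.leaves for elements of blocks
  have hmemT : ∀ {B : Finset α}, B ∈ π.1.parts → ∀ {k : α}, k ∈ B → k ∈ T.leaves := by
    intro B hB k hk
    rw [hleaves]; exact π.1.le hB hk
  -- helper: meets with an outside leaf lie (weakly) above v₀
  have habove : ∀ k ∈ T.leaves, k ∉ v₀ → ∀ x ∈ v₀,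
      v₀ ⊆ T.meetVertex k x ∧ T.meetVertex k x ∈ T.vertexSet := by
    intro k hk hkv x hx
    have hxT : x ∈ T.leaves := BTree.vertex_subset_leaves hv₀T hx
    have hkx : k ≠ x := fun h => hkv (h ▸ hx)
    have hmT : T.meetVertex k x ∈ T.vertexSet := BTree.meet_mem_vertexSet hk hxT hkx
    have hxm : x ∈ T.meetVertex k x := (BTree.mem_meet hk hxT).2
    have hkm : k ∈ T.meetVertex k x := (BTree.mem_meet hk hxT).1
    rcases BTree.laminar hnd hmT hv₀T with h | h | h
    · exact absurd (h hkm) hkv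
    · exact ⟨h, hmT⟩
    · exact absurd hx (Finset.disjoint_left.1 h hxm)
  have hconst : ∀ k ∈ T.leaves, k ∉ v₀ → ∀ x ∈ v₀, ∀ y ∈ v₀,
      T.meetVertex k x = T.meetVertex k y := by
    intro k hk hkv x hx y hy
    have hxT : x ∈ T.leaves := BTree.vertex_subset_leaves hv₀T hx
    have hyT : y ∈ T.leaves := BTree.vertex_subset_leaves hv₀T hy
    have h1 := habove k hk hkv x hx
    have h2 := habove k hk hkv y hy
    apply Finset.Subset.antisymm
    · exact BTree.meet_subset_vertex hnd h2.2 (BTree.mem_meet hk hyT).1 (h2.1 hx)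
    · exact BTree.meet_subset_vertex hnd h1.2 (BTree.mem_meet hk hxT).1 (h1.1 hy)
  -- elements of B₁ inside v₀ are in l.leaves; similarly for B₂
  have hB1v : ∀ {i : α}, i ∈ B₁ → i ∈ v₀ → i ∈ l.leaves := by
    intro i hi hiv
    rw [hv₀eq, Finset.mem_union] at hiv
    rcases hiv with h | h
    · exact h
    · exact absurd (hrB h) (Finset.disjoint_left.1 hdisjB hi)
  have hB2v : ∀ {j : α}, j ∈ B₂ → j ∈ v₀ → j ∈ r.leaves := by
    intro j hj hjv
    rw [hv₀eq, Finset.mem_union] at hjv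
    rcases hjv with h | h
    · exact absurd hj (Finset.disjoint_left.1 hdisjB (hlB h))
    · exact h
  -- the cross-meet analysis
  have hcross : ∀ i ∈ B₁, ∀ j ∈ B₂,
      T.meetVertex i j ∈ insert v₀ (T.S B₁ ∪ T.S B₂) := by
    intro i hi j hj
    have hiT := hmemT hB₁p hi
    have hjT := hmemT hB₂p hj
    have hij : i ≠ j := fun h => Finset.disjoint_left.1 hdisjB hi (h ▸ hj)
    by_cases hi0 : i ∈ v₀
    · by_cases hj0 : j ∈ v₀
      · rw [hmeet_v0 i (hB1v hi hi0) j (hB2v hj hj0)]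
        exact Finset.mem_insert_self _ _
      · -- i ∈ v₀, j ∉ v₀ : meet i j = meet y₀ j ∈ S B₂
        have hy₀v : y₀ ∈ v₀ := hrsub hy₀
        have heq : T.meetVertex i j = T.meetVertex y₀ j := by
          rw [BTree.meet_comm T i j, BTree.meet_comm T y₀ j]
          exact hconst j hjT hj0 i hi0 y₀ hy₀v
        rw [heq]
        refine Finset.mem_insert_of_mem (Finset.mem_union_right _ (BTree.mem_S.2
          ⟨y₀, hrB hy₀, j, hj, ?_, rfl⟩))
        exact fun h => hj0 (h ▸ hy₀v)
    · by_cases hj0 : j ∈ v₀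
      · -- i ∉ v₀, j ∈ v₀ : meet i j = meet i x₀ ∈ S B₁
        have hx₀v : x₀ ∈ v₀ := hlsub hx₀
        have heq : T.meetVertex i j = T.meetVertex i x₀ := hconst i hiT hi0 j hj0 x₀ hx₀v
        rw [heq]
        refine Finset.mem_insert_of_mem (Finset.mem_union_left _ (BTree.mem_S.2
          ⟨i, hi, x₀, hlB hx₀, ?_, rfl⟩))
        exact fun h => hi0 (h ▸ hx₀v)
      · -- both outside v₀
        have hx₀v : x₀ ∈ v₀ := hlsub hx₀
        have hy₀v : y₀ ∈ v₀ := hrsub hy₀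
        have hx₀T : x₀ ∈ T.leaves := BTree.vertex_subset_leaves hv₀T hx₀v
        have hy₀T : y₀ ∈ T.leaves := BTree.vertex_subset_leaves hv₀T hy₀v
        have hM := habove i hiT hi0 x₀ hx₀v
        have hM' := habove j hjT hj0 y₀ hy₀v
        set M := T.meetVertex i x₀ with hMdef
        set M' := T.meetVertex j y₀ with hM'def
        have hiM : i ∈ M := (BTree.mem_meet hiT hx₀T).1
        have hjM' : j ∈ M' := (BTree.mem_meet hjT hy₀T).1
        have hix₀ : i ≠ x₀ := fun h => hi0 (h ▸ hx₀v)
        have hjy₀ : j ≠ y₀ := fun h => hj0 (h ▸ hy₀v)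
        have hMS : M ∈ T.S B₁ := BTree.mem_S.2 ⟨i, hi, x₀, hlB hx₀, hix₀, rfl⟩
        have hM'S : M' ∈ T.S B₂ := BTree.mem_S.2 ⟨j, hj, y₀, hrB hy₀, hjy₀, rfl⟩
        have hmT : T.meetVertex i j ∈ T.vertexSet := BTree.meet_mem_vertexSet hiT hjT hij
        have him : i ∈ T.meetVertex i j := (BTree.mem_meet hiT hjT).1
        have hjm : j ∈ T.meetVertex i j := (BTree.mem_meet hiT hjT).2
        have hv₀ne : v₀.Nonempty := ⟨x₀, hx₀v⟩
        rcases BTree.laminar hnd hmT hv₀T with h | h | h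
        · exact absurd (h him) hi0
        · -- v₀ ⊆ meet i j
          have hMm : M ⊆ T.meetVertex i j :=
            BTree.meet_subset_vertex hnd hmT him (h hx₀v)
          have hM'm : M' ⊆ T.meetVertex i j :=
            BTree.meet_subset_vertex hnd hmT hjm (h hy₀v)
          rcases BTree.laminar hnd hM.2 hM'.2 with h2 | h2 | h2
          · -- M ⊆ M' : meet i j = M'
            have : T.meetVertex i j ⊆ M' :=
              BTree.meet_subset_vertex hnd hM'.2 (h2 hiM) hjM'
            rw [Finset.Subset.antisymm this hM'm]
            exact Finset.mem_insert_of_mem (Finset.mem_union_right _ hM'S)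
          · have : T.meetVertex i j ⊆ M :=
              BTree.meet_subset_vertex hnd hM.2 hiM (h2 hjM')
            rw [Finset.Subset.antisymm this hMm]
            exact Finset.mem_insert_of_mem (Finset.mem_union_left _ hMS)
          · exact absurd (hM'.1 hx₀v) (Finset.disjoint_left.1 h2 (hM.1 hx₀v))
        · -- meet i j disjoint from v₀ : impossible by admissibility
          exfalso
          have hmM : T.meetVertex i j ⊆ M := by
            rcases BTree.laminar hnd hmT hM.2 with h2 | h2 | h2
            · exact h2
            · exact absurd (h2 (hM.1 hx₀v)) (Finset.disjoint_left.1 h.symm hx₀v)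
            · exact absurd hiM (Finset.disjoint_left.1 h2 him)
          have hmM' : T.meetVertex i j ⊆ M' := by
            rcases BTree.laminar hnd hmT hM'.2 with h2 | h2 | h2
            · exact h2
            · exact absurd (h2 (hM'.1 hy₀v)) (Finset.disjoint_left.1 h.symm hy₀v)
            · exact absurd hjM' (Finset.disjoint_left.1 h2 hjm)
          have hMM' : M = M' := by
            apply Finset.Subset.antisymm
            · exact BTree.meet_subset_vertex hnd hM'.2 (hmM' him) (hM'.1 hx₀v)
            · exact BTree.meet_subset_vertex hnd hM.2 (hmM hjm) (hM.1 hy₀v)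
          have hempty := π.2 B₁ hB₁p B₂ hB₂p hB12ne
          have : M ∈ T.S B₁ ∩ T.S B₂ := Finset.mem_inter.2 ⟨hMS, hMM' ▸ hM'S⟩
          rw [hempty] at this
          exact absurd this (Finset.notMem_empty _)
  -- the S identity
  have hSid : T.S (B₁ ∪ B₂) = insert v₀ (T.S B₁ ∪ T.S B₂) := by
    apply Finset.Subset.antisymm
    · intro v hv
      rw [BTree.mem_S] at hv
      obtain ⟨i, hi, j, hj, hij, rfl⟩ := hv
      rw [Finset.mem_union] at hi hj
      rcases hi with hi | hi
      · rcases hj with hj | hj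
        · exact Finset.mem_insert_of_mem (Finset.mem_union_left _
            (BTree.mem_S.2 ⟨i, hi, j, hj, hij, rfl⟩))
        · exact hcross i hi j hj
      · rcases hj with hj | hj
        · rw [BTree.meet_comm]
          exact hcross j hj i hi
        · exact Finset.mem_insert_of_mem (Finset.mem_union_right _
            (BTree.mem_S.2 ⟨i, hi, j, hj, hij, rfl⟩))
    · intro v hv
      rw [Finset.mem_insert, Finset.mem_union] at hv
      rcases hv with rfl | hv | hv
      · exact BTree.mem_S.2 ⟨x₀, Finset.mem_union_left _ (hlB hx₀),
          y₀, Finset.mem_union_right _ (hrB hy₀), hxy_ne, hmeet_v0 x₀ hx₀ y₀ hy₀⟩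
      · exact BTree.S_mono T Finset.subset_union_left hv
      · exact BTree.S_mono T Finset.subset_union_right hv
  -- construct the merged partition
  set τ₀ : Finpartition I := π.1.mergeParts B₁ B₂ hB₁p hB₂p hB12ne with hτ₀def
  have hτ₀parts : τ₀.parts = insert (B₁ ∪ B₂) ((π.1.parts.erase B₂).erase B₁) := rfl
  have hkey : ∀ C ∈ (π.1.parts.erase B₂).erase B₁, T.S (B₁ ∪ B₂) ∩ T.S C = ∅ := by
    intro C hC
    rw [Finset.mem_erase] at hC
    have hC1 : C ≠ B₁ := hC.1
    have hC2 : C ≠ B₂ := (Finset.mem_erase.1 hC.2).1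
    have hCp : C ∈ π.1.parts := (Finset.mem_erase.1 hC.2).2
    rw [Finset.eq_empty_iff_forall_notMem]
    intro x hx
    rw [Finset.mem_inter, hSid, Finset.mem_insert, Finset.mem_union] at hx
    obtain ⟨hx1, hx2⟩ := hx
    rcases hx1 with rfl | hx1 | hx1
    · exact hv₀π (AdPartition.mem_verts.2 ⟨C, hCp, hx2⟩)
    · have := π.2 B₁ hB₁p C hCp (Ne.symm hC1)
      have hmem : x ∈ T.S B₁ ∩ T.S C := Finset.mem_inter.2 ⟨hx1, hx2⟩
      rw [this] at hmem
      exact absurd hmem (Finset.notMem_empty _)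
    · have := π.2 B₂ hB₂p C hCp (Ne.symm hC2)
      have hmem : x ∈ T.S B₂ ∩ T.S C := Finset.mem_inter.2 ⟨hx1, hx2⟩
      rw [this] at hmem
      exact absurd hmem (Finset.notMem_empty _)
  have hadm : T.Admissible τ₀ := by
    intro B hB C hC hBC
    rw [hτ₀parts, Finset.mem_insert] at hB hC
    rcases hB with rfl | hB
    · rcases hC with rfl | hC
      · exact absurd rfl hBC
      · exact hkey C hC
    · rcases hC with rfl | hC
      · rw [Finset.inter_comm]; exact hkey B hB
      · exact π.2 B (Finset.mem_of_mem_erase (Finset.mem_of_mem_erase hB))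
          C (Finset.mem_of_mem_erase (Finset.mem_of_mem_erase hC)) hBC
  set τ : AdPartition T I := ⟨τ₀, hadm⟩ with hτdef
  -- verts of τ
  have hvertsτ : AdPartition.verts T τ.1 = insert v₀ (AdPartition.verts T π.1) := by
    ext v
    rw [AdPartition.mem_verts, Finset.mem_insert, AdPartition.mem_verts]
    constructor
    · rintro ⟨C, hC, hv⟩
      rw [hτ₀parts, Finset.mem_insert] at hC
      rcases hC with rfl | hC
      · rw [hSid, Finset.mem_insert, Finset.mem_union] at hv
        rcases hv with rfl | hv | hv
        · exact Or.inl rfl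
        · exact Or.inr ⟨B₁, hB₁p, hv⟩
        · exact Or.inr ⟨B₂, hB₂p, hv⟩
      · exact Or.inr ⟨C, Finset.mem_of_mem_erase (Finset.mem_of_mem_erase hC), hv⟩
    · rintro (rfl | ⟨C, hC, hv⟩)
      · refine ⟨B₁ ∪ B₂, Finset.mem_insert_self _ _, ?_⟩
        rw [hSid]; exact Finset.mem_insert_self _ _
      · by_cases hCB1 : C = B₁
        · rw [hCB1] at hv
          exact ⟨B₁ ∪ B₂, Finset.mem_insert_self _ _,
            BTree.S_mono T Finset.subset_union_left hv⟩
        · by_cases hCB2 : C = B₂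
          · rw [hCB2] at hv
            exact ⟨B₁ ∪ B₂, Finset.mem_insert_self _ _,
              BTree.S_mono T Finset.subset_union_right hv⟩
          · exact ⟨C, Finset.mem_insert_of_mem
              (Finset.mem_erase.2 ⟨hCB1, Finset.mem_erase.2 ⟨hCB2, hC⟩⟩), hv⟩
  -- π < τ
  have hle : π.1 ≤ τ₀ := by
    intro B hB
    by_cases h1 : B = B₁
    · subst h1
      exact ⟨B ∪ B₂, Finset.mem_insert_self _ _, Finset.subset_union_left⟩
    · by_cases h2 : B = B₂
      · subst h2
        exact ⟨B₁ ∪ B, Finset.mem_insert_self _ _, Finset.subset_union_right⟩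
      · exact ⟨B, Finset.mem_insert_of_mem
          (Finset.mem_erase.2 ⟨h1, Finset.mem_erase.2 ⟨h2, hB⟩⟩), le_refl B⟩
  have hne : π.1 ≠ τ₀ := by
    intro h
    have hmem : B₁ ∪ B₂ ∈ π.1.parts := by
      rw [h, hτ₀parts]; exact Finset.mem_insert_self _ _
    obtain ⟨y, hy⟩ := π.1.nonempty_of_mem_parts hB₂p
    have e : B₂ = B₁ ∪ B₂ :=
      π.1.eq_of_mem_parts hB₂p hmem hy (Finset.mem_union_right _ hy)
    obtain ⟨x, hx⟩ := π.1.nonempty_of_mem_parts hB₁p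
    have hx2 : x ∈ B₂ := by rw [e]; exact Finset.mem_union_left _ hx
    exact hB12ne (π.1.eq_of_mem_parts hB₁p hB₂p hx hx2)
  have hlt : π < τ := by
    refine lt_of_le_of_ne (show π.1 ≤ τ.1 from hle) ?_
    intro h
    exact hne (congrArg Subtype.val h)
  -- blocks of coarser admissible partitions absorb π-blocks
  have hblocks : ∀ (σ : AdPartition T I), π < σ → ∀ D ∈ σ.1.parts, ∀ a ∈ D,
      ∃ Ba ∈ π.1.parts, a ∈ Ba ∧ Ba ⊆ D := by
    intro σ hπσ D hD a ha
    have haI : a ∈ I := σ.1.le hD ha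
    obtain ⟨Ba, hBa, haBa⟩ := π.1.exists_mem haI
    have hπσle : π.1 ≤ σ.1 := hπσ.le
    obtain ⟨D', hD', hBaD'⟩ := hπσle hBa
    have : D = D' := σ.1.eq_of_mem_parts hD hD' ha (hBaD' haBa)
    exact ⟨Ba, hBa, haBa, this ▸ hBaD'⟩
  -- the covering property
  have hcov : π ⋖ τ := by
    refine ⟨hlt, ?_⟩
    intro σ hπσ hστ
    have hπσle : π.1 ≤ σ.1 := hπσ.le
    obtain ⟨D₁, hD₁, hB₁D⟩ := hπσle hB₁p
    obtain ⟨D₂, hD₂, hB₂D⟩ := hπσle hB₂p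
    by_cases hDD : D₁ = D₂
    · -- τ ≤ σ, contradicting σ < τ
      apply hστ.not_ge
      show τ₀ ≤ σ.1
      intro B hB
      rw [hτ₀parts, Finset.mem_insert] at hB
      rcases hB with rfl | hB
      · exact ⟨D₁, hD₁, Finset.union_subset hB₁D (hDD ▸ hB₂D)⟩
      · exact hπσle (Finset.mem_of_mem_erase (Finset.mem_of_mem_erase hB))
    · -- σ ≤ π, contradicting π < σ
      apply hπσ.not_ge
      show σ.1 ≤ π.1
      intro D hD
      have hστle : σ.1 ≤ τ.1 := hστ.le
      obtain ⟨C, hC, hDC⟩ := hστle hD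
      rw [hτ₀parts, Finset.mem_insert] at hC
      rcases hC with rfl | hC
      · -- D ⊆ B₁ ∪ B₂
        obtain ⟨a, ha⟩ := σ.1.nonempty_of_mem_parts hD
        obtain ⟨Ba, hBa, haBa, hBaD⟩ := hblocks σ hπσ D hD a ha
        have haB : Ba = B₁ ∨ Ba = B₂ := by
          rcases Finset.mem_union.1 (hDC ha) with h | h
          · exact Or.inl (π.1.eq_of_mem_parts hBa hB₁p haBa h)
          · exact Or.inr (π.1.eq_of_mem_parts hBa hB₂p haBa h)
        -- show D is contained in B₁ or B₂
        by_cases hDB1 : D ⊆ B₁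
        · exact ⟨B₁, hB₁p, hDB1⟩
        · by_cases hDB2 : D ⊆ B₂
          · exact ⟨B₂, hB₂p, hDB2⟩
          · exfalso
            -- D contains an element outside B₁ and one outside B₂,
            -- hence meets both B₁ and B₂, hence B₁ ∪ B₂ ⊆ D, so D₁ = D = D₂.
            have hmeets1 : ∃ b ∈ D, b ∈ B₁ := by
              obtain ⟨b, hb, hb2⟩ := Finset.not_subset.1 hDB2
              rcases Finset.mem_union.1 (hDC hb) with h | h
              · exact ⟨b, hb, h⟩
              · exact absurd h hb2
            have hmeets2 : ∃ b ∈ D, b ∈ B₂ := by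
              obtain ⟨b, hb, hb1⟩ := Finset.not_subset.1 hDB1
              rcases Finset.mem_union.1 (hDC hb) with h | h
              · exact absurd h hb1
              · exact ⟨b, hb, h⟩
            obtain ⟨b1, hb1D, hb1B⟩ := hmeets1
            obtain ⟨b2, hb2D, hb2B⟩ := hmeets2
            have e1 : D₁ = D := σ.1.eq_of_mem_parts hD₁ hD (hB₁D hb1B) hb1D
            have e2 : D₂ = D := σ.1.eq_of_mem_parts hD₂ hD (hB₂D hb2B) hb2D
            exact hDD (e1.trans e2.symm)
      · -- D ⊆ C with C a π-part
        exact ⟨C, Finset.mem_of_mem_erase (Finset.mem_of_mem_erase hC), hDC⟩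
  refine ⟨τ, ⟨hcov, hvertsτ⟩, ?_⟩
  -- uniqueness
  rintro τ' ⟨hcov', hverts'⟩
  have hv₀τ' : v₀ ∈ AdPartition.verts T τ'.1 := by
    rw [hverts']; exact Finset.mem_insert_self _ _
  rw [AdPartition.mem_verts] at hv₀τ'
  obtain ⟨D, hD, hv₀S⟩ := hv₀τ'
  rw [BTree.mem_S] at hv₀S
  obtain ⟨i, hi, j, hj, hij, hmeet⟩ := hv₀S
  have hiT : i ∈ T.leaves := by rw [hleaves]; exact τ'.1.le hD hi
  have hjT : j ∈ T.leaves := by rw [hleaves]; exact τ'.1.le hD hj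
  have hπτ'le : π.1 ≤ τ'.1 := hcov'.1.le
  obtain ⟨D₁', hD₁', hB₁D'⟩ := hπτ'le hB₁p
  obtain ⟨D₂', hD₂', hB₂D'⟩ := hπτ'le hB₂p
  have hmeet' : T.meetVertex i j = l.leaves ∪ r.leaves := by rw [hmeet, hv₀eq]
  have hBD : B₁ ⊆ D ∧ B₂ ⊆ D := by
    rcases BTree.meet_split hnd hsub hiT hjT hij hmeet' with ⟨h1, h2⟩ | ⟨h1, h2⟩
    · have e1 : D₁' = D := τ'.1.eq_of_mem_parts hD₁' hD (hB₁D' (hlB h1)) hi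
      have e2 : D₂' = D := τ'.1.eq_of_mem_parts hD₂' hD (hB₂D' (hrB h2)) hj
      exact ⟨e1 ▸ hB₁D', e2 ▸ hB₂D'⟩
    · have e1 : D₂' = D := τ'.1.eq_of_mem_parts hD₂' hD (hB₂D' (hrB h1)) hi
      have e2 : D₁' = D := τ'.1.eq_of_mem_parts hD₁' hD (hB₁D' (hlB h2)) hj
      exact ⟨e2 ▸ hB₁D', e1 ▸ hB₂D'⟩
  have hτle : τ ≤ τ' := by
    show τ₀ ≤ τ'.1
    intro B hB
    rw [hτ₀parts, Finset.mem_insert] at hB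
    rcases hB with rfl | hB
    · exact ⟨D, hD, Finset.union_subset hBD.1 hBD.2⟩
    · exact hπτ'le (Finset.mem_of_mem_erase (Finset.mem_of_mem_erase hB))
  by_contra hne'
  exact hcov'.2 hlt (lt_of_le_of_ne hτle (fun h => hne' (h.symm)))
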